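/- arXiv:1011.6304 — 4 statements merged into one kernel-verified Lean document; each statement's English description precedes it below -/
import Mathlib

section
/- For every knot diagram D and every crossing c of D, there exists a set P of regions of D such that performing region crossing changes at all regions of P changes the over/under information at c and at no other crossing. -/
/-!
STATEMENT 7 (Main theorem): for every knot diagram `D` and every crossing `c`
of `D`, some set of region crossing changes switches the over/under datum at
`c` and at no other crossing.

A knot diagram is modelled faithfully by a rotation system.  A *dart* is a
pair `(v, i)`: the `i`-th edge-end (in counterclockwise cyclic order) at the
crossing `v`.  The fixed-point-free involution `α` pairs the two ends of each
edge of the underlying 4-valent graph; `opp` sends a dart to the opposite dart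
at the same crossing (continuing along the same strand).  The diagram is a
*knot* diagram when the relation generated by `α` and `opp` relates all darts
(the underlying curve has a single component), and it is *planar* (lies on
`S²`) when Euler's formula holds: the face permutation `α.trans rot` has
exactly `n + 2` orbits.  Regions are the orbits of the face permutation, and
`M R c` is the parity of the number of corners (darts) of the region `R` at
the crossing `c`.  Region crossing changes at a finite set `P` of regions add
`∑_{R ∈ P} M R ·` to the over/under vector in `F₂ = ZMod 2`.
-/

open Equiv

abbrev Dart (n : ℕ) := Fin n × Fin 4

/-- the rotation of darts around a crossing -/
def rot (n : ℕ) : Equiv.Perm (Dart n) :=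
  (Equiv.refl (Fin n)).prodCongr (Equiv.addRight (1 : Fin 4))

/-- the opposite dart at the same crossing (same strand) -/
def opp (n : ℕ) : Equiv.Perm (Dart n) :=
  (Equiv.refl (Fin n)).prodCongr (Equiv.addRight (2 : Fin 4))

/-- the setoid whose classes are the cycles (orbits) of a permutation -/
def cycleSetoid {β : Type*} (f : Equiv.Perm β) : Setoid β :=
  ⟨f.SameCycle, ⟨fun _ => Equiv.Perm.SameCycle.refl f _,
    Equiv.Perm.SameCycle.symm, Equiv.Perm.SameCycle.trans⟩⟩

/-- a knot diagram with `n` crossings, encoded by a rotation system -/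
structure KnotDiagram (n : ℕ) where
  pos : 0 < n
  /-- the fixed-point-free involution pairing the two ends of each edge -/
  α : Equiv.Perm (Dart n)
  invol : ∀ d, α (α d) = d
  no_fix : ∀ d, α d ≠ d
  /-- the underlying curve has a single component (it is a knot diagram) -/
  oneComponent : ∀ d d' : Dart n,
    Relation.EqvGen (fun x y => y = α x ∨ y = opp n x) d d'
  /-- planarity via Euler's formula: the face permutation has `n + 2` orbits -/
  planar : Nat.card (Quotient (cycleSetoid (α.trans (rot n)))) = n + 2

/-- the regions (faces) of a knot diagram -/
def KnotDiagram.Region {n : ℕ} (D : KnotDiagram n) : Type :=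
  Quotient (cycleSetoid (D.α.trans (rot n)))

/-- the region in whose boundary a given dart (corner) lies -/
def KnotDiagram.regionOf {n : ℕ} (D : KnotDiagram n) (d : Dart n) : D.Region :=
  Quotient.mk _ d

/-- the region-crossing incidence matrix over `F₂`: the parity of the number
of corners of region `R` at crossing `c` -/
noncomputable def KnotDiagram.M {n : ℕ} (D : KnotDiagram n) (R : D.Region) (c : Fin n) :
    ZMod 2 :=
  (Nat.card {i : Fin 4 // D.regionOf (c, i) = R} : ZMod 2)

/-- the effect of region crossing changes at a set `P` of regions on the
crossing `c` -/
noncomputable def KnotDiagram.effect {n : ℕ} (D : KnotDiagram n) (P : Finset D.Region)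
    (c : Fin n) : ZMod 2 :=
  ∑ R ∈ P, D.M R c

-- development of auxiliary lemmas
namespace KnotDiagram
variable {n : ℕ} (D : KnotDiagram n)

noncomputable instance : Fintype D.Region :=
  haveI : Finite D.Region := Quotient.finite _
  Fintype.ofFinite _

lemma regionOf_rot_alpha (d : Dart n) : D.regionOf (rot n (D.α d)) = D.regionOf d :=
  (Quotient.sound (show Equiv.Perm.SameCycle (D.α.trans (rot n)) d (rot n (D.α d)) from
    ⟨1, by simp⟩)).symm

lemma regionOf_alpha (d : Dart n) : D.regionOf (D.α d) = D.regionOf (rot n d) := by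
  have h := D.regionOf_rot_alpha (D.α d)
  rw [D.invol] at h
  exact h.symm

lemma rot_apply (c : Fin n) (j : Fin 4) : rot n (c, j) = (c, j + 1) := rfl
lemma opp_apply (c : Fin n) (j : Fin 4) : opp n (c, j) = (c, j + 2) := rfl

end KnotDiagram
namespace KnotDiagram
variable {n : ℕ} (D : KnotDiagram n)

/-- vertex sum identity -/
lemma vertex_sum (g : D.Region → ZMod 2) (c : Fin n) (j : Fin 4) :
    (g (D.regionOf (c, j)) + g (D.regionOf (rot n (c, j)))) +
      (g (D.regionOf (opp n (c, j))) + g (D.regionOf (rot n (opp n (c, j))))) =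
    ∑ i : Fin 4, g (D.regionOf (c, i)) := by
  rw [← Equiv.sum_comp (Equiv.addLeft j) (fun i => g (D.regionOf (c, i))), Fin.sum_univ_four]
  simp only [Equiv.coe_addLeft, rot_apply, opp_apply]
  have h3 : j + 2 + 1 = j + 3 := by
    have : ∀ j : Fin 4, j + 2 + 1 = j + 3 := by decide
    exact this j
  rw [h3, add_zero]
  ring

/-- H is constant on darts -/
lemma H_const (g : D.Region → ZMod 2)
    (hg : ∀ c : Fin n, ∑ i : Fin 4, g (D.regionOf (c, i)) = 0)
    (d d' : Dart n) :
    g (D.regionOf d) + g (D.regionOf (rot n d)) =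
      g (D.regionOf d') + g (D.regionOf (rot n d')) := by
  set H : Dart n → ZMod 2 := fun x => g (D.regionOf x) + g (D.regionOf (rot n x)) with hH
  have key : ∀ x y : Dart n, (y = D.α x ∨ y = opp n x) → H y = H x := by
    rintro x y (rfl | rfl)
    · simp only [hH]
      rw [D.regionOf_alpha, D.regionOf_rot_alpha, add_comm]
    · obtain ⟨c, j⟩ := x
      have hsum := D.vertex_sum g c j
      rw [hg c] at hsum
      have : ∀ a b : ZMod 2, a + b = 0 → b = a := by decide
      exact this _ _ hsum
  show H d = H d'
  induction D.oneComponent d d' with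
  | rel x y hxy => exact (key x y hxy).symm
  | refl x => rfl
  | symm x y _ ih => exact ih.symm
  | trans x y z _ _ ih1 ih2 => exact ih1.trans ih2

end KnotDiagram
namespace KnotDiagram
variable {n : ℕ} (D : KnotDiagram n)

lemma opp_eq_rot_rot (x : Dart n) : opp n x = rot n (rot n x) := by
  obtain ⟨c, j⟩ := x
  rw [rot_apply, rot_apply, opp_apply]
  have : ∀ j : Fin 4, j + 2 = j + 1 + 1 := by decide
  rw [this j]

lemma regionOf_opp (g : D.Region → ZMod 2)
    (hg : ∀ c : Fin n, ∑ i : Fin 4, g (D.regionOf (c, i)) = 0) (x : Dart n) :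
    g (D.regionOf (opp n x)) = g (D.regionOf x) := by
  have h := D.H_const g hg x (rot n x)
  rw [opp_eq_rot_rot]
  have : ∀ a b c : ZMod 2, a + b = b + c → c = a := by decide
  exact this _ _ _ h

/-- main injectivity: an element of the kernel is determined by its values at
`regionOf d0` and `regionOf (rot d0)` -/
lemma ker_ext (d0 : Dart n) (g g' : D.Region → ZMod 2)
    (hg : ∀ c : Fin n, ∑ i : Fin 4, g (D.regionOf (c, i)) = 0)
    (hg' : ∀ c : Fin n, ∑ i : Fin 4, g' (D.regionOf (c, i)) = 0)
    (h1 : g (D.regionOf d0) = g' (D.regionOf d0))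
    (h2 : g (D.regionOf (rot n d0)) = g' (D.regionOf (rot n d0))) :
    g = g' := by
  set P : Dart n → Prop := fun d =>
    g (D.regionOf d) = g' (D.regionOf d) ∧
      g (D.regionOf (rot n d)) = g' (D.regionOf (rot n d)) with hP
  have key : ∀ x y : Dart n, (y = D.α x ∨ y = opp n x) → (P x ↔ P y) := by
    rintro x y (rfl | rfl)
    · simp only [hP, D.regionOf_alpha, D.regionOf_rot_alpha]
      exact and_comm
    · simp only [hP, D.regionOf_opp g hg, D.regionOf_opp g' hg',
        show rot n (opp n x) = opp n (rot n x) by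
          obtain ⟨c, j⟩ := x
          rw [rot_apply, opp_apply, rot_apply, opp_apply]
          have : ∀ j : Fin 4, j + 2 + 1 = j + 1 + 2 := by decide
          rw [this j]]
  have hstep : ∀ d d' : Dart n, P d ↔ P d' := by
    intro d d'
    induction D.oneComponent d d' with
    | rel x y hxy => exact key x y hxy
    | refl x => exact Iff.rfl
    | symm x y _ ih => exact ih.symm
    | trans x y z _ _ ih1 ih2 => exact ih1.trans ih2
  have hall : ∀ d : Dart n, P d := fun d => (hstep d0 d).mp ⟨h1, h2⟩
  funext R
  obtain ⟨d, rfl⟩ := Quotient.exists_rep R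
  exact (hall d).1

end KnotDiagram
namespace KnotDiagram
variable {n : ℕ} (D : KnotDiagram n)

/-- the linear map sending region coefficients to the effect at each crossing -/
noncomputable def Lmap : (D.Region → ZMod 2) →ₗ[ZMod 2] (Fin n → ZMod 2) where
  toFun g := fun c => ∑ i : Fin 4, g (D.regionOf (c, i))
  map_add' g g' := by
    funext c
    simp [Finset.sum_add_distrib]
  map_smul' a g := by
    funext c
    simp [Finset.mul_sum]

lemma card_ker_le : Nat.card (LinearMap.ker D.Lmap) ≤ 4 := by
  have d0 : Dart n := (⟨0, D.pos⟩, 0)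
  have hinj : Function.Injective (fun g : LinearMap.ker D.Lmap =>
      ((g : D.Region → ZMod 2) (D.regionOf d0),
        (g : D.Region → ZMod 2) (D.regionOf (rot n d0)))) := by
    rintro ⟨g, hg⟩ ⟨g', hg'⟩ hval
    rw [LinearMap.mem_ker] at hg hg'
    have hgc : ∀ c : Fin n, ∑ i : Fin 4, g (D.regionOf (c, i)) = 0 := fun c =>
      congrFun hg c
    have hgc' : ∀ c : Fin n, ∑ i : Fin 4, g' (D.regionOf (c, i)) = 0 := fun c =>
      congrFun hg' c
    have := D.ker_ext d0 g g' hgc hgc'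
      (congrArg Prod.fst hval) (congrArg Prod.snd hval)
    exact Subtype.ext this
  calc Nat.card (LinearMap.ker D.Lmap) ≤ Nat.card (ZMod 2 × ZMod 2) :=
        Nat.card_le_card_of_injective _ hinj
    _ = 4 := by simp [Nat.card_eq_fintype_card]

lemma range_top : LinearMap.range D.Lmap = ⊤ := by
  have hcard := D.card_ker_le
  haveI : Fintype (LinearMap.ker D.Lmap) := Fintype.ofFinite _
  have hk : Module.finrank (ZMod 2) (LinearMap.ker D.Lmap) ≤ 2 := by
    by_contra h
    push_neg at h
    have hpow : Fintype.card (LinearMap.ker D.Lmap) =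
        2 ^ Module.finrank (ZMod 2) (LinearMap.ker D.Lmap) := by
      have := Module.card_eq_pow_finrank (K := ZMod 2) (V := LinearMap.ker D.Lmap)
      simpa using this
    rw [Nat.card_eq_fintype_card, hpow] at hcard
    have : (2:ℕ) ^ 3 ≤ 2 ^ Module.finrank (ZMod 2) (LinearMap.ker D.Lmap) :=
      Nat.pow_le_pow_right (by norm_num) h
    omega
  have hdom : Module.finrank (ZMod 2) (D.Region → ZMod 2) = n + 2 := by
    rw [Module.finrank_fintype_fun_eq_card, ← Nat.card_eq_fintype_card]
    exact D.planar
  have hrn := LinearMap.finrank_range_add_finrank_ker D.Lmap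
  rw [hdom] at hrn
  have hle : Module.finrank (ZMod 2) (LinearMap.range D.Lmap) ≤ n := by
    have := Submodule.finrank_le (LinearMap.range D.Lmap)
    rwa [Module.finrank_fintype_fun_eq_card, Fintype.card_fin] at this
  apply Submodule.eq_top_of_finrank_eq
  rw [Module.finrank_fintype_fun_eq_card, Fintype.card_fin]
  omega

end KnotDiagram
namespace KnotDiagram
variable {n : ℕ} (D : KnotDiagram n)

lemma effect_filter (g : D.Region → ZMod 2) (c : Fin n) :
    D.effect (Finset.univ.filter fun R => g R = 1) c =
      ∑ i : Fin 4, g (D.regionOf (c, i)) := by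
  classical
  have step1 : D.effect (Finset.univ.filter fun R => g R = 1) c =
      ∑ R : D.Region, D.M R c * g R := by
    rw [KnotDiagram.effect, Finset.sum_filter]
    apply Finset.sum_congr rfl
    intro R _
    by_cases h : g R = 1
    · rw [if_pos h, h, mul_one]
    · have h0 : g R = 0 := by
        have : ∀ a : ZMod 2, a ≠ 1 → a = 0 := by decide
        exact this _ h
      rw [if_neg h, h0, mul_zero]
  rw [step1]
  have step2 : ∀ R : D.Region, D.M R c * g R =
      ∑ _i : {i : Fin 4 // D.regionOf (c, i) = R}, g R := by
    intro R
    rw [Finset.sum_const, KnotDiagram.M, Nat.card_eq_fintype_card, nsmul_eq_mul, Finset.card_univ]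
  calc ∑ R : D.Region, D.M R c * g R
      = ∑ R : D.Region, ∑ _i : {i : Fin 4 // D.regionOf (c, i) = R}, g R :=
        Finset.sum_congr rfl fun R _ => step2 R
    _ = ∑ i : Fin 4, g (D.regionOf (c, i)) :=
        Fintype.sum_fiberwise' (fun i : Fin 4 => D.regionOf (c, i)) g

end KnotDiagram

theorem crossing_change_by_region_crossing_changes'
    {n : ℕ} (D : KnotDiagram n) (c : Fin n) :
    ∃ P : Finset D.Region,
      ∀ c' : Fin n, D.effect P c' = if c' = c then 1 else 0 := by
  classical
  have hsurj : Function.Surjective D.Lmap := by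
    rw [← LinearMap.range_eq_top]
    exact D.range_top
  obtain ⟨g, hg⟩ := hsurj (fun c' => if c' = c then 1 else 0)
  refine ⟨Finset.univ.filter fun R => g R = 1, fun c' => ?_⟩
  rw [D.effect_filter g c']
  have : D.Lmap g c' = (if c' = c then 1 else 0 : ZMod 2) := by rw [hg]
  exact this

/-- Main theorem: any single crossing change on a knot diagram is realized by
region crossing changes. -/
theorem crossing_change_by_region_crossing_changes
    {n : ℕ} (D : KnotDiagram n) (c : Fin n) :
    ∃ P : Finset D.Region,
      ∀ c' : Fin n, D.effect P c' = if c' = c then 1 else 0 := by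
  exact crossing_change_by_region_crossing_changes' D c
end

section
/- The standard diagram of the Hopf link cannot be transformed into a diagram of the trivial two-component link by any sequence of region crossing changes. -/
def hopfM : Fin 4 → Fin 2 → ZMod 2 := fun _ _ => 1

def hopfOver : Fin 2 → ZMod 2 := ![1, 0]

def IsTrivial2 (v : Fin 2 → ZMod 2) : Prop := v 0 = v 1

/-- No sequence of region crossing changes turns the standard Hopf link
diagram into a diagram of the trivial two-component link. -/
theorem hopf_not_unknottable_by_region_crossing_changes :
    ∀ P : Finset (Fin 4),
      ¬ IsTrivial2 (fun c => hopfOver c + ∑ R ∈ P, hopfM R c) := by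
  intro P h
  simp only [IsTrivial2, hopfM, hopfOver] at h
  simp at h
end

section
/- Let D be a knot diagram with c(D) crossings. Then the region unknotting number satisfies u_R(D) ≤ c(D)/2 + 1. -/
/-!
Each crossing has four corners whose colours alternate, so it has exactly two corners of each
colour; hence over `𝔽₂` the incidence vectors `M R` of all regions of one colour sum to zero.
A set of regions of one colour therefore has the same effect as its complement within that
colour class, and replacing each colour part of an unknotting set by the smaller of the two
gives an unknotting set of at most `(b + w) / 2 = c(D) / 2 + 1` regions.
-/

open Finset

theorem Fin.card_filter_eq_two_of_forall_ne_add_one (b : Fin 4 → Bool)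
    (hb : ∀ i, b i ≠ b (i + 1)) (t : Bool) : #{i | b i = t} = 2 := by
  revert b t
  decide

section SumHalving

variable {α G : Type*} [DecidableEq α] [AddCommGroup G] [Module (ZMod 2) G] {v : α → G}

theorem Finset.exists_subset_two_mul_card_le_sum_eq {B S : Finset α}
    (hB : ∑ x ∈ B, v x = 0) (hSB : S ⊆ B) :
    ∃ P ⊆ B, 2 * #P ≤ #B ∧ ∑ x ∈ P, v x = ∑ x ∈ S, v x := by
  by_cases hS : 2 * #S ≤ #B
  · exact ⟨S, hSB, hS, rfl⟩
  · refine ⟨B \ S, sdiff_subset, ?_, ?_⟩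
    · have := card_le_card hSB
      rw [card_sdiff_of_subset hSB]
      omega
    · rw [sum_sdiff_eq_sub hSB, hB, zero_sub, ZModModule.neg_eq_self]

theorem Finset.exists_two_mul_card_le_sum_eq [Fintype α] (p : α → Prop) [DecidablePred p]
    (hp : ∑ x with p x, v x = 0) (hnp : ∑ x with ¬p x, v x = 0) (S : Finset α) :
    ∃ P : Finset α, 2 * #P ≤ Fintype.card α ∧ ∑ x ∈ P, v x = ∑ x ∈ S, v x := by
  obtain ⟨P₁, hP₁, hcard₁, hsum₁⟩ :=
    exists_subset_two_mul_card_le_sum_eq hp (filter_subset_filter p (subset_univ S))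
  obtain ⟨P₂, hP₂, hcard₂, hsum₂⟩ :=
    exists_subset_two_mul_card_le_sum_eq hnp (filter_subset_filter _ (subset_univ S))
  have hdisj : Disjoint P₁ P₂ :=
    (disjoint_filter_filter_not univ univ p).mono hP₁ hP₂
  refine ⟨P₁ ∪ P₂, ?_, ?_⟩
  · calc 2 * #(P₁ ∪ P₂) = 2 * #P₁ + 2 * #P₂ := by rw [card_union_of_disjoint hdisj, mul_add]
      _ ≤ #{x | p x} + #{x | ¬p x} := add_le_add hcard₁ hcard₂
      _ = Fintype.card α := card_filter_add_card_filter_not _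
  · rw [sum_union hdisj, hsum₁, hsum₂, sum_filter_add_sum_filter_not]

end SumHalving

section CornerModel

variable {ι Region : Type*} [Fintype Region] [DecidableEq Region]
  (corner : ι → Fin 4 → Region) {col : Region → Bool}

theorem sum_card_corners_of_color_eq_two
    (hcol : ∀ c i, col (corner c i) ≠ col (corner c (i + 1))) (c : ι) (t : Bool) :
    ∑ R with col R = t, #{i | corner c i = R} = 2 := by
  calc ∑ R with col R = t, #{i | corner c i = R}
      = ∑ R with col R = t, #{i ∈ {i | col (corner c i) = t} | corner c i = R} := by
        refine sum_congr rfl fun R hR => ?_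
        rw [filter_filter]
        exact congrArg card (filter_congr fun i _ => by grind)
    _ = #{i | col (corner c i) = t} :=
        (card_eq_sum_card_fiberwise fun i hi => by simpa using hi).symm
    _ = 2 := Fin.card_filter_eq_two_of_forall_ne_add_one _ (hcol c) t

theorem sum_incidence_of_color_eq_zero
    (hcol : ∀ c i, col (corner c i) ≠ col (corner c (i + 1))) (t : Bool) :
    ∑ R with col R = t, (fun c => (#{i | corner c i = R} : ZMod 2)) = 0 := by
  funext c
  rw [Finset.sum_apply, ← Nat.cast_sum, sum_card_corners_of_color_eq_two corner hcol c t]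
  rfl

end CornerModel

theorem region_unknotting_number_le_half_crossings_add_one_general
    {n : ℕ} {Region : Type*} [Fintype Region] [DecidableEq Region]
    (corner : Fin n → Fin 4 → Region)
    (heuler : Fintype.card Region = n + 2)
    (col : Region → Bool)
    (hcol : ∀ c i, col (corner c i) ≠ col (corner c (i + 1)))
    (M : Region → Fin n → ZMod 2)
    (hM : ∀ R c, M R c =
      ((Finset.univ.filter fun i : Fin 4 => corner c i = R).card : ZMod 2))
    (over' : Fin n → ZMod 2)
    (Unknotted : (Fin n → ZMod 2) → Prop)
    (hunknottable : ∃ S : Finset Region,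
      Unknotted (fun c => over' c + ∑ R ∈ S, M R c)) :
    ((sInf {k : ℕ | ∃ P : Finset Region, P.card = k ∧
        Unknotted (fun c => over' c + ∑ R ∈ P, M R c)} : ℕ) : ℚ)
      ≤ (n : ℚ) / 2 + 1 := by
  obtain ⟨S, hS⟩ := hunknottable
  have hclass (t : Bool) : ∑ R with col R = t, M R = 0 :=
    funext₂ hM ▸ sum_incidence_of_color_eq_zero corner hcol t
  obtain ⟨P, hPcard, hPsum⟩ := exists_two_mul_card_le_sum_eq (fun R => col R = true)
    (hclass true) (by simpa using hclass false) S
  have hP : Unknotted (fun c => over' c + ∑ R ∈ P, M R c) := by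
    convert hS using 3 with c
    rw [← Finset.sum_apply, hPsum, Finset.sum_apply]
  have hPcard' : (2 * #P : ℚ) ≤ n + 2 := by exact_mod_cast heuler ▸ hPcard
  calc _ ≤ (#P : ℚ) := Nat.cast_le.mpr (Nat.sInf_le (by exact ⟨P, rfl, hP⟩))
    _ ≤ n / 2 + 1 := by linarith

theorem region_unknotting_number_le_half_crossings_add_one
    {n : ℕ} {Region : Type*} [Fintype Region] [DecidableEq Region]
    (corner : Fin n → Fin 4 → Region)
    (hadj : ∀ c i, corner c i ≠ corner c (i + 1))
    (heuler : Fintype.card Region = n + 2)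
    (col : Region → Bool)
    (hcol : ∀ c i, col (corner c i) ≠ col (corner c (i + 1)))
    (M : Region → Fin n → ZMod 2)
    (hM : ∀ R c, M R c =
      ((Finset.univ.filter fun i : Fin 4 => corner c i = R).card : ZMod 2))
    (over' : Fin n → ZMod 2)
    (Unknotted : (Fin n → ZMod 2) → Prop)
    (hunknottable : ∃ S : Finset Region,
      Unknotted (fun c => over' c + ∑ R ∈ S, M R c)) :
    ((sInf {k : ℕ | ∃ P : Finset Region, P.card = k ∧
        Unknotted (fun c => over' c + ∑ R ∈ P, M R c)} : ℕ) : ℚ)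
      ≤ (n : ℚ) / 2 + 1 :=
  region_unknotting_number_le_half_crossings_add_one_general corner heuler col hcol M hM over'
    Unknotted hunknottable
end

section
/- Let D be a knot diagram and c a crossing; splice D at c to get components D¹ and D². Color the regions of the plane determined by the curve D¹ alone in checkerboard fashion, and let P be the set of regions of D contained in the black part. Then for every crossing p of D between strands that both belong to D¹ (a self-crossing of D¹) that is not reducible in D¹, the effect of region crossing changes at P on p is trivial, while crossings of D between D¹ and D² are changed according to the mod-2 winding parity of D² across the black regions of D¹. -/
/-!
STATEMENT 19.

Corner model: `corner q i` is the region of `D` at the `i`-th corner (cyclic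
order) of crossing `q`, and `M` is the corner-parity incidence matrix over
`F₂`; the effect of region crossing changes at a finite set `P` of regions on
a crossing `q` is `∑_{R ∈ P} M R q`.  After splicing `D` at a crossing into
components `D¹` and `D²`, the regions of `D` refine the regions of the
sub-curve `D¹`: `π` maps each region of `D` to the region of `D¹` containing
it, and `colD1` is a checkerboard coloring of the regions of `D¹`.  `P` is the
set of regions of `D` contained in the black part.

`selfD1 p` marks the self-crossings of `D¹` among the crossings of `D`; at
such a crossing the four corners of `D` map to the four corners of `D¹`, which
alternate in color (`hself`); non-reducibility in `D¹` says the opposite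
`D¹`-corners are distinct (stated per crossing in the conclusion).  `mixed q`
marks the crossings between `D¹` and `D²`; there the `D²`-strand runs inside a
region of `D¹` on each side of the `D¹`-strand, so the four corners of `D` lie
in at most two `D¹`-regions, the corners on each side of the `D¹`-strand
mapping to a common `D¹`-region (`hmixed`).

Conclusions: at a self-crossing of `D¹` that is not reducible in `D¹` the
effect of the region crossing changes at `P` is trivial; at a `D¹`–`D²`
crossing the effect equals the mod-2 winding parity of `D²` through the black
regions of `D¹`, i.e. the parity of the number of corners of the crossing
lying in black regions of `D¹`.
-/
theorem splice_coloring_effect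
    {n : ℕ} {Region Region1 : Type*} [Fintype Region] [DecidableEq Region]
    (corner : Fin n → Fin 4 → Region)
    (hadj : ∀ c i, corner c i ≠ corner c (i + 1))
    (M : Region → Fin n → ZMod 2)
    (hM : ∀ R c, M R c =
      ((Finset.univ.filter fun i : Fin 4 => corner c i = R).card : ZMod 2))
    (π : Region → Region1) (colD1 : Region1 → Bool)
    (P : Finset Region)
    (hP : P = Finset.univ.filter fun R => colD1 (π R) = true)
    (selfD1 mixed : Fin n → Prop)
    (hself : ∀ p, selfD1 p →
      ∀ i, colD1 (π (corner p i)) ≠ colD1 (π (corner p (i + 1))))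
    (hmixed : ∀ q, mixed q →
      π (corner q 0) = π (corner q 1) ∧ π (corner q 2) = π (corner q 3)) :
    (∀ p, selfD1 p →
        π (corner p 0) ≠ π (corner p 2) → π (corner p 1) ≠ π (corner p 3) →
        ∑ R ∈ P, M R p = 0) ∧
      (∀ q, mixed q →
        ∑ R ∈ P, M R q =
          ((Finset.univ.filter
            fun i : Fin 4 => colD1 (π (corner q i)) = true).card : ZMod 2)) := by

  have key : ∀ c : Fin n, ∑ R ∈ P, M R c =
      ((Finset.univ.filter fun i : Fin 4 =>
        colD1 (π (corner c i)) = true).card : ZMod 2) := by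
    intro c
    have lhs : ∑ R ∈ P, M R c =
        ∑ i : Fin 4, if corner c i ∈ P then (1 : ZMod 2) else 0 := by
      simp only [hM, Finset.card_filter, Nat.cast_sum, Nat.cast_ite,
        Nat.cast_one, Nat.cast_zero]
      rw [Finset.sum_comm]
      refine Finset.sum_congr rfl fun i _ => ?_
      exact Finset.sum_ite_eq P (corner c i) (fun _ => (1 : ZMod 2))
    rw [lhs, Finset.card_filter, Nat.cast_sum]
    refine Finset.sum_congr rfl fun i _ => ?_
    simp [hP]
  constructor
  · intro p hp _ _
    rw [key p]
    have h0 := hself p hp 0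
    have h1 := hself p hp 1
    have h2 := hself p hp 2
    have e0 : (0 : Fin 4) + 1 = 1 := by decide
    have e1 : (1 : Fin 4) + 1 = 2 := by decide
    have e2 : (2 : Fin 4) + 1 = 3 := by decide
    rw [e0] at h0; rw [e1] at h1; rw [e2] at h2
    rw [Finset.card_filter, Fin.sum_univ_four]
    cases hb0 : colD1 (π (corner p 0)) <;>
      cases hb1 : colD1 (π (corner p 1)) <;>
      cases hb2 : colD1 (π (corner p 2)) <;>
      cases hb3 : colD1 (π (corner p 3)) <;>
      simp_all <;> decide
  · intro q _
    exact key q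
end
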